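/- arXiv:0904.0050 — 4 statements merged into one kernel-verified Lean document; each statement's English description precedes it below -/
import Mathlib

section
/- For 0 < z < 1, the difference g_{3/2}(1) − g_{3/2}(z) is at most (1/4)·√π·√(−ln z) · 4, i.e. ζ(3/2) − g_{3/2}(z) ≤ √π · √(−ln z), where g_{3/2}(z) = ∑_{n≥1} z^n n^{-3/2}. -/
/-!
Write `t = -log z`, so `zⁿ = e^{-nt}`. Each term of the difference is
`n^{-3/2} (1 - e^{-nt}) = ∫₀ᵗ n^{-1/2} e^{-nu} du`, so the partial sums equal
`∫₀ᵗ ∑ n^{-1/2} e^{-nu} du`. Comparing the sum of the decreasing function `x^{-1/2} e^{-ux}` with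
its integral gives `∑ n^{-1/2} e^{-nu} ≤ Γ(1/2) u^{-1/2} = √π u^{-1/2}`, and
`∫₀ᵗ √π u^{-1/2} du = 2 √π √t`.
-/

open Real MeasureTheory Set

/-- Unlike `AntitoneOn.sum_range_le_integral`, nothing is required of `f` at `0`, where it may
blow up. -/
lemma AntitoneOn.sum_range_le_integral_Ioi {f : ℝ → ℝ} (anti : AntitoneOn f (Ioi 0))
    (integrable : IntegrableOn f (Ioi 0)) (nonneg : ∀ x ∈ Ioi 0, 0 ≤ f x) (N : ℕ) :
    ∑ n ∈ Finset.range N, f (n + 1) ≤ ∫ x in Ioi 0, f x := by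
  have hint (n : ℕ) : IntervalIntegrable f volume n (n + 1) :=
    (intervalIntegrable_iff_integrableOn_Ioc_of_le (by linarith)).2 <|
      integrable.mono_set fun x hx => (Nat.cast_nonneg n).trans_lt hx.1
  calc ∑ n ∈ Finset.range N, f (n + 1)
      ≤ ∑ n ∈ Finset.range N, ∫ x in (n : ℝ)..(n + 1), f x := by
        gcongr with n
        calc f (n + 1) = ∫ _ in (n : ℝ)..(n + 1), f (n + 1) := by simp
          _ ≤ ∫ x in (n : ℝ)..(n + 1), f x :=
            intervalIntegral.integral_mono_on_of_le_Ioo (by linarith) (by simp) (hint n)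
              fun x hx => anti ((Nat.cast_nonneg n).trans_lt hx.1)
                (by simp only [mem_Ioi]; positivity) hx.2.le
    _ = ∫ x in (0 : ℝ)..N, f x := by
        simpa using intervalIntegral.sum_integral_adjacent_intervals
          (a := fun n : ℕ => (n : ℝ)) fun n _ => by simpa using hint n
    _ ≤ ∫ x in Ioi 0, f x := by
        rw [intervalIntegral.integral_of_le (Nat.cast_nonneg N)]
        exact setIntegral_mono_set integrable
          (ae_restrict_of_forall_mem measurableSet_Ioi nonneg) Ioc_subset_Ioi_self.eventuallyLE

lemma integrableOn_rpow_neg_half_mul_exp_neg_mul {u : ℝ} (hu : 0 < u) :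
    IntegrableOn (fun x : ℝ => x ^ (-(1 : ℝ) / 2) * exp (-(x * u))) (Ioi 0) := by
  simpa only [rpow_one, neg_mul, mul_comm u] using
    integrableOn_rpow_mul_exp_neg_mul_rpow (s := -(1 : ℝ) / 2) (p := 1) (by norm_num) one_pos hu

lemma integral_rpow_neg_half_mul_exp_neg_mul {u : ℝ} (hu : 0 < u) :
    ∫ x in Ioi 0, x ^ (-(1 : ℝ) / 2) * exp (-(x * u)) = √π * u ^ (-(1 : ℝ) / 2) := by
  have h := integral_rpow_mul_exp_neg_mul_Ioi (a := 1 / 2) one_half_pos hu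
  rw [Gamma_one_half_eq, one_div u, inv_rpow hu.le, ← rpow_neg hu.le] at h
  norm_num [mul_comm _ u] at h ⊢
  rw [h, mul_comm]

lemma sum_rpow_neg_half_mul_exp_neg_mul_le {u : ℝ} (hu : 0 < u) (N : ℕ) :
    ∑ n ∈ Finset.range N, ((n : ℝ) + 1) ^ (-(1 : ℝ) / 2) * exp (-((n + 1) * u))
      ≤ √π * u ^ (-(1 : ℝ) / 2) := by
  rw [← integral_rpow_neg_half_mul_exp_neg_mul hu]
  refine AntitoneOn.sum_range_le_integral_Ioi (fun x hx y _ hxy => ?_)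
    (integrableOn_rpow_neg_half_mul_exp_neg_mul hu) (fun x hx => ?_) N
  · exact mul_le_mul (rpow_le_rpow_of_nonpos hx hxy (by norm_num))
      (exp_le_exp.2 (by nlinarith)) (exp_pos _).le (rpow_nonneg (le_of_lt hx) _)
  · have : 0 < x := hx
    positivity

lemma integral_rpow_mul_exp_neg_mul {m : ℝ} (hm : 0 < m) (a t : ℝ) :
    ∫ u in (0 : ℝ)..t, m ^ a * exp (-(m * u)) = m ^ (a - 1) * (1 - exp (-(m * t))) := by
  have hderiv (u : ℝ) : HasDerivAt (fun u => -(m ^ (a - 1) * exp (-(m * u))))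
      (m ^ a * exp (-(m * u))) u := by
    have h := (((hasDerivAt_id' u).const_mul (-m)).exp).const_mul (-m ^ (a - 1))
    simp only [neg_mul, mul_one] at h
    exact h.congr_deriv (by rw [rpow_sub_one hm.ne']; field_simp)
  rw [intervalIntegral.integral_eq_sub_of_hasDerivAt (fun u _ => hderiv u)
    ((by fun_prop : Continuous fun u => m ^ a * exp (-(m * u))).intervalIntegrable _ _)]
  simp only [mul_zero, neg_zero, exp_zero]
  ring

lemma integral_sqrt_pi_mul_rpow_neg_half (t : ℝ) :
    ∫ u in (0 : ℝ)..t, √π * u ^ (-(1 : ℝ) / 2) = 2 * √π * √t := by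
  rw [intervalIntegral.integral_const_mul, integral_rpow (Or.inl (by norm_num)), sqrt_eq_rpow t]
  norm_num [zero_rpow]
  ring

lemma sum_rpow_mul_one_sub_exp_neg_mul_le {t : ℝ} (ht : 0 ≤ t) (N : ℕ) :
    ∑ n ∈ Finset.range N, ((n : ℝ) + 1) ^ (-(3 : ℝ) / 2) * (1 - exp (-((n + 1) * t)))
      ≤ 2 * √π * √t := by
  have hterm (n : ℕ) : ((n : ℝ) + 1) ^ (-(3 : ℝ) / 2) * (1 - exp (-((n + 1) * t)))
      = ∫ u in (0 : ℝ)..t, ((n : ℝ) + 1) ^ (-(1 : ℝ) / 2) * exp (-((n + 1) * u)) := by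
    rw [integral_rpow_mul_exp_neg_mul (by positivity)]
    norm_num
  have hint (n : ℕ) : IntervalIntegrable
      (fun u => ((n : ℝ) + 1) ^ (-(1 : ℝ) / 2) * exp (-((n + 1) * u))) volume 0 t :=
    (by fun_prop : Continuous _).intervalIntegrable _ _
  calc ∑ n ∈ Finset.range N, ((n : ℝ) + 1) ^ (-(3 : ℝ) / 2) * (1 - exp (-((n + 1) * t)))
      = ∫ u in (0 : ℝ)..t, ∑ n ∈ Finset.range N,
          ((n : ℝ) + 1) ^ (-(1 : ℝ) / 2) * exp (-((n + 1) * u)) := by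
        simp only [hterm]
        exact (intervalIntegral.integral_finsetSum fun n _ => hint n).symm
    _ ≤ ∫ u in (0 : ℝ)..t, √π * u ^ (-(1 : ℝ) / 2) :=
        intervalIntegral.integral_mono_on_of_le_Ioo ht
          (by simpa only [Finset.sum_fn] using IntervalIntegrable.sum _ fun n _ => hint n)
          ((intervalIntegral.intervalIntegrable_rpow' (by norm_num)).const_mul _)
          fun u hu => sum_rpow_neg_half_mul_exp_neg_mul_le hu.1 N
    _ = 2 * √π * √t := integral_sqrt_pi_mul_rpow_neg_half t

lemma tsum_rpow_mul_one_sub_exp_neg_mul_le {t : ℝ} (ht : 0 ≤ t) :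
    ∑' n : ℕ, ((n : ℝ) + 1) ^ (-(3 : ℝ) / 2) * (1 - exp (-((n + 1) * t))) ≤ 2 * √π * √t :=
  Real.tsum_le_of_sum_range_le
    (fun n => mul_nonneg (by positivity)
      (sub_nonneg.2 (exp_le_one_iff.2 (neg_nonpos.2 (by positivity)))))
    (sum_rpow_mul_one_sub_exp_neg_mul_le ht)

/-- For `0 < z < 1`, `ζ(3/2) - g_{3/2}(z) ≤ 2 √π √(-ln z)`, where
`g_{3/2}(z) = ∑_{n ≥ 1} zⁿ n^{-3/2}`. -/
theorem stmt_1 (z : ℝ) (hz0 : 0 < z) (hz1 : z < 1) :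
    (∑' n : ℕ, ((n : ℝ) + 1) ^ (-(3 : ℝ) / 2)) -
      (∑' n : ℕ, z ^ (n + 1) * ((n : ℝ) + 1) ^ (-(3 : ℝ) / 2)) ≤
        2 * Real.sqrt π * Real.sqrt (-Real.log z) := by
  have hz (n : ℕ) : z ^ (n + 1) = exp (-((n + 1) * -log z)) := by
    rw [← exp_log hz0, ← exp_nat_mul, log_exp]
    push_cast
    ring_nf
  have hsum : Summable fun n : ℕ => ((n : ℝ) + 1) ^ (-(3 : ℝ) / 2) := by
    simpa using (summable_nat_add_iff 1).2 (summable_nat_rpow.2 (by norm_num : -(3 : ℝ) / 2 < -1))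
  have hsum_z : Summable fun n : ℕ => z ^ (n + 1) * ((n : ℝ) + 1) ^ (-(3 : ℝ) / 2) :=
    hsum.of_nonneg_of_le (fun n => by positivity)
      fun n => mul_le_of_le_one_left (by positivity) (pow_le_one₀ hz0.le hz1.le)
  calc _ = ∑' n : ℕ, ((n : ℝ) + 1) ^ (-(3 : ℝ) / 2) * (1 - exp (-((n + 1) * -log z))) := by
        rw [← hsum.tsum_sub hsum_z]
        exact tsum_congr fun n => by rw [hz]; ring
    _ ≤ _ := tsum_rpow_mul_one_sub_exp_neg_mul_le (neg_nonneg.2 (log_nonpos hz0.le hz1.le))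
end

section
/- The function f(t) = t(1 − e^{−t})/(t − 1 + e^{−t}) defined for t > 0 satisfies 1 ≤ f(t) ≤ 2 for all t > 0. -/
/-! The lower bound is `(1 + t) e^{-t} ≤ 1`, i.e. `1 + t ≤ e^t`. The upper bound is
`2 - t ≤ (2 + t) e^{-t}`: the difference `t - 2 + (2 + t) e^{-t}` vanishes at `0` and has
derivative `1 - (1 + t) e^{-t} ≥ 0`, which is the lower bound once more. -/

open Real

lemma one_add_mul_exp_neg_le_one (x : ℝ) : (1 + x) * exp (-x) ≤ 1 := by
  rw [exp_neg, ← div_eq_mul_inv, div_le_one (exp_pos x)]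
  linarith [add_one_le_exp x]

lemma hasDerivAt_sub_two_add_two_add_mul_exp_neg (x : ℝ) :
    HasDerivAt (fun y => y - 2 + (2 + y) * exp (-y)) (1 - (1 + x) * exp (-x)) x := by
  have hexp : HasDerivAt (fun y => exp (-y)) (-exp (-x)) x := by
    simpa using (hasDerivAt_neg x).exp
  exact (((hasDerivAt_id' x).sub_const 2).add
    (((hasDerivAt_id' x).const_add 2).mul hexp)).congr_deriv (by ring)

lemma monotone_sub_two_add_two_add_mul_exp_neg :
    Monotone fun y : ℝ => y - 2 + (2 + y) * exp (-y) :=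
  monotone_of_deriv_nonneg
    (fun x => (hasDerivAt_sub_two_add_two_add_mul_exp_neg x).differentiableAt)
    fun x => by
      rw [(hasDerivAt_sub_two_add_two_add_mul_exp_neg x).deriv]
      linarith [one_add_mul_exp_neg_le_one x]

lemma two_sub_le_two_add_mul_exp_neg {t : ℝ} (ht : 0 ≤ t) : 2 - t ≤ (2 + t) * exp (-t) := by
  have := monotone_sub_two_add_two_add_mul_exp_neg ht
  simp only [exp_neg, exp_zero] at this ⊢
  linarith

/-- For `t > 0`, the function `f(t) = t(1-e^{-t})/(t-1+e^{-t})` satisfies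
`1 ≤ f(t) ≤ 2`. -/
theorem stmt_5 (t : ℝ) (ht : 0 < t) :
    1 ≤ t * (1 - Real.exp (-t)) / (t - 1 + Real.exp (-t)) ∧
      t * (1 - Real.exp (-t)) / (t - 1 + Real.exp (-t)) ≤ 2 := by
  have hden : 0 < t - 1 + exp (-t) := by
    linarith [add_one_lt_exp (neg_ne_zero.mpr ht.ne')]
  constructor
  · rw [le_div_iff₀ hden]
    linarith [one_add_mul_exp_neg_le_one t]
  · rw [div_le_iff₀ hden]
    linarith [two_sub_le_two_add_mul_exp_neg ht.le]
end

section
/- The function f(t) = t(1 − e^{−t})/(t − 1 + e^{−t}) is monotone decreasing on (0, ∞), with limit 2 as t → 0⁺ and limit 1 as t → ∞. -/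
/-!
Writing `e = e^{-t}`, the derivative of `f = expRatio` is `(t² e - (1 - e)²) / (t - 1 + e)²`,
and `(1 - e)² - t² e = 4 e (sinh² (t/2) - (t/2)²) ≥ 0`, so `f` is antitone. At `0⁺` numerator
and denominator both vanish to second order and two applications of L'Hôpital's rule give `2`; at
infinity, dividing both by `t` shows `f(t) = (1 - e) / (1 + (e - 1)/t) → 1`.
-/

open Filter Topology Real Set

noncomputable def expRatio (t : ℝ) : ℝ := t * (1 - exp (-t)) / (t - 1 + exp (-t))

lemma hasDerivAt_exp_neg (t : ℝ) : HasDerivAt (fun s => exp (-s)) (-exp (-t)) t := by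
  simpa using (hasDerivAt_neg t).exp

lemma hasDerivAt_mul_one_sub_exp_neg (t : ℝ) :
    HasDerivAt (fun s => s * (1 - exp (-s))) (1 - exp (-t) + t * exp (-t)) t :=
  ((hasDerivAt_id' t).mul ((hasDerivAt_exp_neg t).const_sub 1)).congr_deriv (by ring)

lemma hasDerivAt_sub_one_add_exp_neg (t : ℝ) :
    HasDerivAt (fun s => s - 1 + exp (-s)) (1 - exp (-t)) t :=
  (((hasDerivAt_id' t).sub_const 1).add (hasDerivAt_exp_neg t)).congr_deriv (by ring)

lemma sub_one_add_exp_neg_pos {t : ℝ} (ht : t ≠ 0) : 0 < t - 1 + exp (-t) := by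
  linarith [add_one_lt_exp (neg_ne_zero.mpr ht)]

lemma sq_mul_exp_neg_le_one_sub_exp_neg_sq (t : ℝ) :
    t ^ 2 * exp (-t) ≤ (1 - exp (-t)) ^ 2 := by
  have hsinh : (t / 2) ^ 2 ≤ sinh (t / 2) ^ 2 := by
    rw [sq_le_sq, abs_sinh]
    exact self_le_sinh_iff.mpr (abs_nonneg _)
  have hexp : exp (-t) = exp (-(t / 2)) ^ 2 := by rw [← exp_nat_mul]; ring_nf
  have hsub : 1 - exp (-t) = 2 * exp (-(t / 2)) * sinh (t / 2) := by
    rw [sinh_eq, mul_comm 2, mul_assoc, mul_div_cancel₀ _ two_ne_zero, mul_sub, ← exp_add,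
      ← exp_add]
    norm_num
    ring
  rw [hsub, hexp]
  nlinarith [sq_nonneg (exp (-(t / 2)))]

lemma hasDerivAt_expRatio {t : ℝ} (ht : t ≠ 0) :
    HasDerivAt expRatio
      ((t ^ 2 * exp (-t) - (1 - exp (-t)) ^ 2) / (t - 1 + exp (-t)) ^ 2) t :=
  ((hasDerivAt_mul_one_sub_exp_neg t).div (hasDerivAt_sub_one_add_exp_neg t)
    (sub_one_add_exp_neg_pos ht).ne').congr_deriv (by ring)

lemma expRatio_antitoneOn : AntitoneOn expRatio (Ioi 0) := by
  have hderiv (t : ℝ) (ht : t ∈ Ioi 0) := hasDerivAt_expRatio (ne_of_gt ht)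
  refine antitoneOn_of_hasDerivWithinAt_nonpos (convex_Ioi 0)
    (fun t ht => (hderiv t ht).continuousAt.continuousWithinAt)
    (fun t ht => (hderiv t (interior_subset ht)).hasDerivWithinAt) fun t _ => ?_
  exact div_nonpos_of_nonpos_of_nonneg
    (sub_nonpos.mpr (sq_mul_exp_neg_le_one_sub_exp_neg_sq t)) (sq_nonneg _)

lemma tendsto_nhdsGT_of_continuous {f : ℝ → ℝ} (hf : Continuous f) (a : ℝ) :
    Tendsto f (𝓝[>] a) (𝓝 (f a)) :=
  hf.continuousAt.tendsto.mono_left nhdsWithin_le_nhds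

lemma tendsto_expRatio_nhdsGT_zero : Tendsto expRatio (𝓝[>] 0) (𝓝 2) := by
  have hpos : ∀ᶠ t in 𝓝[>] (0 : ℝ), 0 < t := eventually_mem_nhdsWithin
  have hderivRatio : Tendsto (fun t => (1 - exp (-t) + t * exp (-t)) / (1 - exp (-t)))
      (𝓝[>] 0) (𝓝 2) := by
    refine HasDerivAt.lhopital_zero_nhdsGT (f' := fun t => (2 - t) * exp (-t))
      (g' := fun t => exp (-t)) (Eventually.of_forall fun t => ?_)
      (Eventually.of_forall fun t => ?_) (Eventually.of_forall fun t => (exp_pos _).ne')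
      ?_ ?_ ?_
    · exact (((hasDerivAt_exp_neg t).const_sub 1).add
        ((hasDerivAt_id' t).mul (hasDerivAt_exp_neg t))).congr_deriv (by ring)
    · simpa using (hasDerivAt_exp_neg t).const_sub 1
    · simpa using tendsto_nhdsGT_of_continuous (f := fun t => 1 - exp (-t) + t * exp (-t))
        (by fun_prop) 0
    · simpa using tendsto_nhdsGT_of_continuous (f := fun t => 1 - exp (-t)) (by fun_prop) 0
    · simp_rw [mul_div_cancel_right₀ _ (exp_pos _).ne']
      simpa using tendsto_nhdsGT_of_continuous (f := fun t => 2 - t) (by fun_prop) 0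
  refine HasDerivAt.lhopital_zero_nhdsGT
    (hpos.mono fun t _ => hasDerivAt_mul_one_sub_exp_neg t)
    (hpos.mono fun t _ => hasDerivAt_sub_one_add_exp_neg t)
    (hpos.mono fun t ht => by linarith [exp_lt_one_iff.mpr (neg_neg_of_pos ht)]) ?_ ?_ hderivRatio
  · simpa using tendsto_nhdsGT_of_continuous (f := fun t => t * (1 - exp (-t))) (by fun_prop) 0
  · simpa using tendsto_nhdsGT_of_continuous (f := fun t => t - 1 + exp (-t)) (by fun_prop) 0

lemma expRatio_eq_div {t : ℝ} (ht : t ≠ 0) :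
    expRatio t = (1 - exp (-t)) / (1 + (exp (-t) - 1) / t) := by
  rw [expRatio]
  field_simp
  ring

lemma tendsto_expRatio_atTop : Tendsto expRatio atTop (𝓝 1) := by
  have hexp : Tendsto (fun t => exp (-t)) atTop (𝓝 0) := tendsto_exp_neg_atTop_nhds_zero
  have hcorr : Tendsto (fun t => (exp (-t) - 1) / t) atTop (𝓝 0) :=
    (hexp.sub_const 1).div_atTop tendsto_id
  have hlim := (hexp.const_sub 1).div (hcorr.const_add 1) (by norm_num)
  rw [sub_zero, add_zero, div_one] at hlim
  refine hlim.congr' ?_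
  filter_upwards [eventually_ne_atTop 0] with t ht
  exact (expRatio_eq_div ht).symm

/-- `f(t) = t(1-e^{-t})/(t-1+e^{-t})` is monotone decreasing on `(0, ∞)`, with
limit `2` as `t → 0⁺` and limit `1` as `t → ∞`. -/
theorem stmt_6 :
    AntitoneOn (fun t : ℝ => t * (1 - Real.exp (-t)) / (t - 1 + Real.exp (-t)))
        (Set.Ioi (0 : ℝ)) ∧
      Tendsto (fun t : ℝ => t * (1 - Real.exp (-t)) / (t - 1 + Real.exp (-t)))
        (nhdsWithin 0 (Set.Ioi 0)) (nhds 2) ∧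
      Tendsto (fun t : ℝ => t * (1 - Real.exp (-t)) / (t - 1 + Real.exp (-t)))
        atTop (nhds 1) :=
  ⟨expRatio_antitoneOn, tendsto_expRatio_nhdsGT_zero, tendsto_expRatio_atTop⟩
end

section
/- Let U ≥ 0 be measurable on ℝ^d and let K_β(x,y) denote the (nonnegative) integral kernel of e^{2βΔ} − e^{β(2Δ−U)}. Define a(β) = (8πβ)^{-1} ∫∫ K_β(x,y) dx dy, a'(β) = (8πβ)^{d/2−1} ∫ K_β(x,x) dx, and a''(β) = (8πβ)^{d/2−1} ∫ K_β(x,−x) dx. Then max{a'(β), a''(β)} ≤ 2^{d/2} · a(β/2). -/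
open Real MeasureTheory

/-!
Write `K_β = p_β - q_β` and split both kernels through time `β/2`; for the heat kernel this is
the Gaussian convolution identity. Then `K_β(x,z) = ∫ (p p - q q)(y) dy`, and the pointwise bound
`ab - a'b' ≤ a (b - b') + b' (a - a')` with `a, b' ≤ sup p_{β/2} = (4πβ)^{-d/2}` dominates
`K_β(x,z)` by `(4πβ)^{-d/2}` times the row integral of `K_{β/2}` at `x` plus its column integral
at `z`. Integrating along `z = x` or `z = -x` (both measure preserving) gives
`2 (4πβ)^{-d/2} ∬ K_{β/2}`, and the powers of `8πβ` rearrange into the stated constant.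
-/

theorem integral_mul_sub_integral_mul_le {α : Type*} [MeasurableSpace α] {μ : Measure α}
    {f g u v : α → ℝ} {M : ℝ} (hfg : Integrable (fun y => f y * g y) μ)
    (hf : AEStronglyMeasurable f μ) (hg : AEStronglyMeasurable g μ)
    (hfu : Integrable (fun y => f y - u y) μ) (hgv : Integrable (fun y => g y - v y) μ)
    (hu : ∀ y, 0 ≤ u y) (huf : ∀ y, u y ≤ f y)
    (hv : ∀ y, 0 ≤ v y) (hvg : ∀ y, v y ≤ g y)
    (hfM : ∀ y, f y ≤ M) (hgM : ∀ y, g y ≤ M) :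
    ∫ y, f y * g y ∂μ - ∫ y, u y * v y ∂μ ≤
      M * ∫ y, (f y - u y) ∂μ + M * ∫ y, (g y - v y) ∂μ := by
  have hu_meas : AEStronglyMeasurable u μ := (hf.sub hfu.aestronglyMeasurable).congr
    (ae_of_all _ fun y => sub_sub_cancel (f y) (u y))
  have hv_meas : AEStronglyMeasurable v μ := (hg.sub hgv.aestronglyMeasurable).congr
    (ae_of_all _ fun y => sub_sub_cancel (g y) (v y))
  have huv : Integrable (fun y => u y * v y) μ := by
    refine hfg.mono (hu_meas.mul hv_meas) (ae_of_all _ fun y => ?_)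
    rw [norm_of_nonneg (mul_nonneg (hu y) (hv y)),
      norm_of_nonneg (mul_nonneg ((hu y).trans (huf y)) ((hv y).trans (hvg y)))]
    exact mul_le_mul (huf y) (hvg y) (hv y) ((hu y).trans (huf y))
  rw [← integral_sub hfg huv, ← integral_const_mul, ← integral_const_mul,
    ← integral_add (hfu.const_mul M) (hgv.const_mul M)]
  refine integral_mono (hfg.sub huv) ((hfu.const_mul M).add (hgv.const_mul M)) fun y => ?_
  -- `f g - u v = f (g - v) + v (f - u)`, and both `f` and `v` are at most `M`
  have h₁ := mul_le_mul_of_nonneg_right (hfM y) (sub_nonneg.2 (hvg y))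
  have h₂ := mul_le_mul_of_nonneg_right ((hvg y).trans (hgM y)) (sub_nonneg.2 (huf y))
  dsimp only
  linarith

theorem integral_le_two_mul_integral_integral {α : Type*} [MeasurableSpace α] {μ : Measure α}
    [SFinite μ] {k G : α → α → ℝ} {M : ℝ}
    (σ : α ≃ᵐ α) (hσ : MeasurePreserving σ μ μ)
    (hk : Integrable (fun xy : α × α => k xy.1 xy.2) (μ.prod μ))
    (hG : Integrable (fun x => G x (σ x)) μ)
    (hle : ∀ x z, Integrable (k x) μ → Integrable (fun y => k y z) μ →
      G x z ≤ M * ∫ y, k x y ∂μ + M * ∫ y, k y z ∂μ) :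
    ∫ x, G x (σ x) ∂μ ≤ 2 * M * ∫ x, ∫ y, k x y ∂μ ∂μ := by
  have hrow : Integrable (fun x => ∫ y, k x y ∂μ) μ := hk.integral_prod_left
  have hcol : Integrable (fun x => ∫ y, k y (σ x) ∂μ) μ :=
    (hσ.integrable_comp_emb σ.measurableEmbedding).2 hk.swap.integral_prod_left
  have hcol_eq : ∫ x, ∫ y, k y (σ x) ∂μ ∂μ = ∫ x, ∫ y, k x y ∂μ ∂μ := by
    rw [hσ.integral_comp' (fun z => ∫ y, k y z ∂μ)]
    exact (integral_integral_swap (f := k) hk).symm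
  have hslices : ∀ᵐ x ∂μ, Integrable (k x) μ ∧ Integrable (fun y => k y (σ x)) μ :=
    hk.prod_right_ae.and (hσ.quasiMeasurePreserving.ae hk.prod_left_ae)
  calc ∫ x, G x (σ x) ∂μ
      ≤ ∫ x, (M * ∫ y, k x y ∂μ + M * ∫ y, k y (σ x) ∂μ) ∂μ :=
        integral_mono_ae hG ((hrow.const_mul M).add (hcol.const_mul M))
          (hslices.mono fun x hx => hle x (σ x) hx.1 hx.2)
    _ = 2 * M * ∫ x, ∫ y, k x y ∂μ ∂μ := by
        rw [integral_add (hrow.const_mul M) (hcol.const_mul M), integral_const_mul,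
          integral_const_mul, hcol_eq]
        ring

theorem rpow_sub_one_mul_two_mul_rpow_neg {c : ℝ} (hc : 0 < c) (s : ℝ) :
    (2 * c) ^ (s - 1) * (2 * c ^ (-s)) = 2 ^ s * c⁻¹ := by
  have hcs : 0 < c ^ s := rpow_pos_of_pos hc s
  rw [rpow_sub_one (by positivity), mul_rpow zero_le_two hc.le, rpow_neg hc.le]
  field_simp

section HeatKernel

open Module

variable {V : Type*} [NormedAddCommGroup V] [InnerProductSpace ℝ V]

/-- The kernel of `e^{2tΔ}` on `V`. -/
noncomputable def heatKernel (t : ℝ) (x y : V) : ℝ :=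
  (8 * π * t) ^ (-(finrank ℝ V : ℝ) / 2) * exp (-‖x - y‖ ^ 2 / (8 * t))

theorem continuous_heatKernel_left (t : ℝ) (y : V) :
    Continuous fun x : V => heatKernel t x y := by
  unfold heatKernel; fun_prop

theorem continuous_heatKernel_right (t : ℝ) (x : V) :
    Continuous fun y : V => heatKernel t x y := by
  unfold heatKernel; fun_prop

theorem heatKernel_le {t : ℝ} (ht : 0 ≤ t) (x y : V) :
    heatKernel t x y ≤ (8 * π * t) ^ (-(finrank ℝ V : ℝ) / 2) := by
  refine mul_le_of_le_one_right (by positivity) (exp_le_one_iff.2 ?_)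
  exact div_nonpos_of_nonpos_of_nonneg (by simp) (by positivity)

theorem heatKernel_mul_heatKernel {t : ℝ} (ht : 0 < t) (x y z : V) :
    heatKernel (t / 2) x y * heatKernel (t / 2) y z =
      heatKernel t x z * heatKernel (t / 4) y ((2 : ℝ)⁻¹ • (x + z)) := by
  set m : V := (2 : ℝ)⁻¹ • (x + z)
  have hpar :
      ‖x - y‖ ^ 2 + ‖y - z‖ ^ 2 = 2⁻¹ * ‖x - z‖ ^ 2 + 2 * ‖y - m‖ ^ 2 := by
    have h := parallelogram_law_with_norm ℝ (x - y) (y - z)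
    have h1 : x - y - (y - z) = (2 : ℝ) • (m - y) := by module
    rw [sub_add_sub_cancel, h1, norm_smul, norm_sub_rev m y] at h
    norm_num at h
    linarith
  have hconst : (8 * π * (t / 2)) ^ (-(finrank ℝ V : ℝ) / 2) *
      (8 * π * (t / 2)) ^ (-(finrank ℝ V : ℝ) / 2) =
      (8 * π * t) ^ (-(finrank ℝ V : ℝ) / 2) *
        (8 * π * (t / 4)) ^ (-(finrank ℝ V : ℝ) / 2) := by
    rw [← mul_rpow (by positivity) (by positivity), ← mul_rpow (by positivity) (by positivity)]
    ring_nf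
  have hexp : -‖x - y‖ ^ 2 / (8 * (t / 2)) + -‖y - z‖ ^ 2 / (8 * (t / 2)) =
      -‖x - z‖ ^ 2 / (8 * t) + -‖y - m‖ ^ 2 / (8 * (t / 4)) := by
    calc _ = -(‖x - y‖ ^ 2 + ‖y - z‖ ^ 2) / (4 * t) := by ring
      _ = _ := by rw [hpar]; ring
  unfold heatKernel
  rw [mul_mul_mul_comm, ← exp_add, hexp, exp_add, hconst]
  ring

variable [FiniteDimensional ℝ V] [MeasurableSpace V] [BorelSpace V]

theorem integral_heatKernel {t : ℝ} (ht : 0 < t) (m : V) : ∫ y, heatKernel t y m = 1 := by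
  have hexp (y : V) : -‖y - m‖ ^ 2 / (8 * t) = -(8 * t)⁻¹ * ‖y - m‖ ^ 2 := by ring
  simp only [heatKernel, hexp]
  rw [integral_const_mul,
    integral_sub_right_eq_self (fun y : V => exp (-(8 * t)⁻¹ * ‖y‖ ^ 2)) m,
    GaussianFourier.integral_rexp_neg_mul_sq_norm (by positivity), div_inv_eq_mul,
    show π * (8 * t) = 8 * π * t by ring, neg_div,
    rpow_neg (by positivity), inv_mul_cancel₀ (by positivity)]

theorem integrable_heatKernel {t : ℝ} (ht : 0 < t) (m : V) :
    Integrable fun y => heatKernel t y m :=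
  Integrable.of_integral_ne_zero (by simp [integral_heatKernel ht])

theorem integrable_heatKernel_mul_heatKernel {t : ℝ} (ht : 0 < t) (x z : V) :
    Integrable fun y => heatKernel (t / 2) x y * heatKernel (t / 2) y z := by
  simp only [heatKernel_mul_heatKernel ht]
  exact (integrable_heatKernel (by positivity) _).const_mul _

theorem integral_heatKernel_mul_heatKernel {t : ℝ} (ht : 0 < t) (x z : V) :
    ∫ y, heatKernel (t / 2) x y * heatKernel (t / 2) y z = heatKernel t x z := by
  simp only [heatKernel_mul_heatKernel ht]
  rw [integral_const_mul, integral_heatKernel (by positivity), mul_one]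

theorem heatKernel_sub_integral_mul_le {t : ℝ} (ht : 0 < t) {Q : V → V → ℝ}
    (hQ : ∀ x y, 0 ≤ Q x y) (hQ_le : ∀ x y, Q x y ≤ heatKernel (t / 2) x y) {x z : V}
    (hx : Integrable fun y => heatKernel (t / 2) x y - Q x y)
    (hz : Integrable fun y => heatKernel (t / 2) y z - Q y z) :
    heatKernel t x z - ∫ y, Q x y * Q y z ≤
      (8 * π * (t / 2)) ^ (-(finrank ℝ V : ℝ) / 2) * (∫ y, heatKernel (t / 2) x y - Q x y) +
      (8 * π * (t / 2)) ^ (-(finrank ℝ V : ℝ) / 2) *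
        ∫ y, heatKernel (t / 2) y z - Q y z := by
  rw [← integral_heatKernel_mul_heatKernel ht]
  exact integral_mul_sub_integral_mul_le (integrable_heatKernel_mul_heatKernel ht x z)
    (continuous_heatKernel_right _ x).aestronglyMeasurable
    (continuous_heatKernel_left _ z).aestronglyMeasurable hx hz (hQ x) (hQ_le x)
    (hQ · z) (hQ_le · z) (heatKernel_le (by positivity) x) (heatKernel_le (by positivity) · z)

end HeatKernel

/-- Let `U ≥ 0` and let `K_β(x,y) ≥ 0` be the integral kernel of
`e^{2βΔ} - e^{β(2Δ-U)}`, i.e. `K_β = p_β - q_β` where `p_β` is the free heat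
kernel `p_β(x,y) = (8πβ)^{-d/2} e^{-|x-y|²/(8β)}` and `q_β` is the Schrödinger
semigroup kernel, which satisfies `0 ≤ q_β ≤ p_β` and the semigroup property.
With `a(β) = (8πβ)⁻¹ ∬ K_β(x,y) dx dy`, `a'(β) = (8πβ)^{d/2-1} ∫ K_β(x,x) dx`,
`a''(β) = (8πβ)^{d/2-1} ∫ K_β(x,-x) dx`, one has
`max{a'(β), a''(β)} ≤ 2^{d/2} a(β/2)`. -/
theorem stmt_19 (d : ℕ)
    (p q K : ℝ → EuclideanSpace ℝ (Fin d) → EuclideanSpace ℝ (Fin d) → ℝ)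
    (hp : ∀ t, 0 < t → ∀ x y,
      p t x y = (8 * π * t) ^ (-(d : ℝ) / 2) * Real.exp (-‖x - y‖ ^ 2 / (8 * t)))
    (hq_nonneg : ∀ t, 0 < t → ∀ x y, 0 ≤ q t x y)
    (hq_le_p : ∀ t, 0 < t → ∀ x y, q t x y ≤ p t x y)
    (hq_semigroup : ∀ t, 0 < t → ∀ x z, q t x z = ∫ y, q (t / 2) x y * q (t / 2) y z)
    (hK : ∀ t x y, K t x y = p t x y - q t x y)
    (β : ℝ) (hβ : 0 < β)
    (h_int_diag : Integrable (fun x : EuclideanSpace ℝ (Fin d) => K β x x))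
    (h_int_anti : Integrable (fun x : EuclideanSpace ℝ (Fin d) => K β x (-x)))
    (h_int_half : Integrable (fun xy : EuclideanSpace ℝ (Fin d) × EuclideanSpace ℝ (Fin d) =>
      K (β / 2) xy.1 xy.2)) :
    max ((8 * π * β) ^ ((d : ℝ) / 2 - 1) * ∫ x, K β x x)
        ((8 * π * β) ^ ((d : ℝ) / 2 - 1) * ∫ x, K β x (-x)) ≤
      (2 : ℝ) ^ ((d : ℝ) / 2) *
        ((8 * π * (β / 2))⁻¹ * ∫ x, ∫ y, K (β / 2) x y) := by
  have hp_eq : ∀ t, 0 < t → p t = heatKernel t := fun t ht => by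
    ext x y; rw [hp t ht, heatKernel, finrank_euclideanSpace_fin]
  have hK_eq : ∀ t, 0 < t → K t = fun x y => heatKernel t x y - q t x y := fun t ht => by
    ext x y; rw [hK, hp_eq t ht]
  set M := (8 * π * (β / 2)) ^ (-(d : ℝ) / 2) with hM
  have hpoint : ∀ x z, Integrable (K (β / 2) x) → Integrable (fun y => K (β / 2) y z) →
      K β x z ≤ M * (∫ y, K (β / 2) x y) + M * ∫ y, K (β / 2) y z := by
    intro x z hx hz
    simp only [hK_eq β hβ, hK_eq _ (half_pos hβ)] at hx hz ⊢
    rw [hq_semigroup β hβ]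
    simpa [finrank_euclideanSpace_fin] using heatKernel_sub_integral_mul_le hβ
      (hq_nonneg _ (half_pos hβ)) (hp_eq _ (half_pos hβ) ▸ hq_le_p _ (half_pos hβ)) hx hz
  rw [Measure.volume_eq_prod] at h_int_half
  have hdiag := integral_le_two_mul_integral_integral (MeasurableEquiv.refl _)
    (MeasurePreserving.id volume) h_int_half h_int_diag hpoint
  have hanti := integral_le_two_mul_integral_integral (MeasurableEquiv.neg _)
    (Measure.measurePreserving_neg volume) h_int_half h_int_anti hpoint
  have hconst : (8 * π * β) ^ ((d : ℝ) / 2 - 1) * (2 * M) =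
      2 ^ ((d : ℝ) / 2) * (8 * π * (β / 2))⁻¹ := by
    rw [show 8 * π * β = 2 * (8 * π * (β / 2)) by ring, hM, neg_div]
    exact rpow_sub_one_mul_two_mul_rpow_neg (by positivity) _
  set I := ∫ x, ∫ y, K (β / 2) x y
  have hscale : ∀ F, F ≤ 2 * M * I → (8 * π * β) ^ ((d : ℝ) / 2 - 1) * F ≤
      2 ^ ((d : ℝ) / 2) * ((8 * π * (β / 2))⁻¹ * I) :=
    fun F hF => by
      calc _ ≤ (8 * π * β) ^ ((d : ℝ) / 2 - 1) * (2 * M * I) := by gcongr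
        _ = _ := by linear_combination I * hconst
  exact max_le (hscale _ hdiag) (hscale _ hanti)
end
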